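/- arXiv:1302.1216 — 3 statements merged into one kernel-verified Lean document; each statement's English description precedes it below -/
import Mathlib

section
/- Let X and Y be independent exponential random variables with means γ_AB > 0 and γ_AR > 0, let ρ > 0 and R ≥ 0. Then P((1 + ρX)/(1 + ρY) < 2^R) = 1 − (γ_AB/(2^R γ_AR + γ_AB)) · exp(−(2^R − 1)/(ρ γ_AB)). -/
open MeasureTheory ProbabilityTheory Real Set

/-! For `Y ≥ 0` the outage event is `X < (2^R - 1)/ρ + 2^R Y`. By independence its probability is
`E[F_X((2^R - 1)/ρ + 2^R Y)]` with `F_X(t) = 1 - exp(-t/γAB)`, and the Laplace transform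
`E[exp(-sY)] = b/(b + s)` of the exponential law of rate `b = 1/γAR` evaluates this expectation. -/

namespace ProbabilityTheory

lemma expMeasure_eq_withDensity (r : ℝ) :
    expMeasure r = volume.withDensity (exponentialPDF r) := rfl

lemma expMeasure_Iio {r t : ℝ} (hr : 0 < r) (ht : 0 ≤ t) :
    expMeasure r (Iio t) = ENNReal.ofReal (1 - exp (-(r * t))) := by
  rw [expMeasure_eq_withDensity, withDensity_apply _ measurableSet_Iio,
    Measure.restrict_congr_set Iio_ae_eq_Iic, lintegral_exponentialPDF_eq_antiDeriv hr t,
    if_pos ht]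

lemma ae_nonneg_expMeasure {r : ℝ} (hr : 0 < r) : ∀ᵐ x ∂expMeasure r, 0 ≤ x :=
  ae_iff.2 <| by
    simp only [not_le]
    exact (expMeasure_Iio hr le_rfl).trans (by simp)

lemma integral_exp_neg_mul_expMeasure {r s : ℝ} (hr : 0 < r) (hs : -r < s) :
    ∫ x, exp (-(s * x)) ∂expMeasure r = r / (r + s) := by
  rw [expMeasure_eq_withDensity,
    integral_withDensity_eq_integral_toReal_smul (f := exponentialPDF r)
      (measurable_exponentialPDFReal r).ennreal_ofReal (ae_of_all _ fun _ => ENNReal.ofReal_lt_top),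
    ← setIntegral_eq_integral_of_forall_compl_eq_zero (s := Ici 0) fun x hx => by
      rw [exponentialPDF_of_neg (not_le.1 hx), ENNReal.toReal_zero, zero_smul],
    integral_Ici_eq_integral_Ioi]
  calc ∫ x in Ioi 0, (exponentialPDF r x).toReal • exp (-(s * x))
      = ∫ x in Ioi 0, r * exp (-(r + s) * x) := by
        refine setIntegral_congr_fun measurableSet_Ioi fun x hx => ?_
        rw [exponentialPDF_of_nonneg hx.le, ENNReal.toReal_ofReal (by positivity),
          smul_eq_mul, mul_assoc, ← exp_add]
        ring_nf
    _ = r / (r + s) := by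
        rw [integral_const_mul, integral_exp_mul_Ioi (by linarith), mul_zero, exp_zero]
        field_simp

lemma integrable_exp_neg_mul_expMeasure {r s : ℝ} (hr : 0 < r) (hs : -r < s) :
    Integrable (fun x => exp (-(s * x))) (expMeasure r) :=
  .of_integral_ne_zero <| by
    rw [integral_exp_neg_mul_expMeasure hr hs]; exact (div_pos hr (by linarith)).ne'

lemma IndepFun.measure_preimage_prodMk {Ω α β : Type*} [MeasurableSpace Ω] [MeasurableSpace α]
    [MeasurableSpace β] {μ : Measure Ω} [IsFiniteMeasure μ] {X : Ω → α} {Y : Ω → β}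
    (hXY : IndepFun X Y μ) (hX : AEMeasurable X μ) (hY : AEMeasurable Y μ) {S : Set (α × β)}
    (hS : MeasurableSet S) :
    μ ((fun ω => (X ω, Y ω)) ⁻¹' S) = ∫⁻ y, μ.map X {x | (x, y) ∈ S} ∂μ.map Y := by
  rw [← Measure.map_apply_of_aemeasurable (hX.prodMk hY) hS,
    hXY.map_prod_eq_prod_map_map hX hY, Measure.prod_apply_symm hS]
  rfl

lemma measure_lt_add_mul_of_indepFun_expMeasure {Ω : Type*} [MeasurableSpace Ω] {μ : Measure Ω}
    [IsFiniteMeasure μ] {X Y : Ω → ℝ} {a b c τ : ℝ} (ha : 0 < a) (hb : 0 < b) (hc : 0 ≤ c)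
    (hτ : 0 ≤ τ) (hXm : AEMeasurable X μ) (hYm : AEMeasurable Y μ)
    (hX : μ.map X = expMeasure a) (hY : μ.map Y = expMeasure b) (hXY : IndepFun X Y μ) :
    μ {ω | X ω < c + τ * Y ω} = ENNReal.ofReal (1 - exp (-(a * c)) * (b / (b + a * τ))) := by
  have : IsProbabilityMeasure (expMeasure b) := isProbabilityMeasure_expMeasure hb
  have hS : MeasurableSet {p : ℝ × ℝ | p.1 < c + τ * p.2} :=
    measurableSet_lt measurable_fst (by fun_prop)
  have hs : -b < a * τ := by nlinarith
  have hint : Integrable (fun y => 1 - exp (-(a * c)) * exp (-(a * τ * y))) (expMeasure b) :=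
    (integrable_const 1).sub ((integrable_exp_neg_mul_expMeasure hb hs).const_mul _)
  have hnn : 0 ≤ᵐ[expMeasure b] fun y => 1 - exp (-(a * c)) * exp (-(a * τ * y)) :=
    (ae_nonneg_expMeasure hb).mono fun y hy => sub_nonneg.2 <|
      mul_le_one₀ (exp_le_one_iff.2 (by nlinarith)) (exp_nonneg _)
        (exp_le_one_iff.2 (by nlinarith [mul_nonneg ha.le hτ]))
  calc μ {ω | X ω < c + τ * Y ω}
      = ∫⁻ y, expMeasure a (Iio (c + τ * y)) ∂expMeasure b := by
        rw [← hX, ← hY]; exact hXY.measure_preimage_prodMk hXm hYm hS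
    _ = ∫⁻ y, ENNReal.ofReal (1 - exp (-(a * c)) * exp (-(a * τ * y))) ∂expMeasure b :=
        lintegral_congr_ae <| (ae_nonneg_expMeasure hb).mono fun y hy => by
          dsimp only
          rw [expMeasure_Iio ha (by positivity), ← exp_add]
          ring_nf
    _ = ENNReal.ofReal (∫ y, 1 - exp (-(a * c)) * exp (-(a * τ * y)) ∂expMeasure b) :=
        (ofReal_integral_eq_lintegral_ofReal hint hnn).symm
    _ = ENNReal.ofReal (1 - exp (-(a * c)) * (b / (b + a * τ))) := by
        rw [integral_sub (integrable_const 1)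
            ((integrable_exp_neg_mul_expMeasure hb hs).const_mul _),
          integral_const, integral_const_mul, integral_exp_neg_mul_expMeasure hb hs]
        simp

end ProbabilityTheory

/-- Secrecy outage probability of direct transmission: for independent exponentials
`X, Y` with means `γAB, γAR`, SNR `ρ > 0` and target rate `R ≥ 0`,
`P((1+ρX)/(1+ρY) < 2^R) = 1 - γAB/(2^R γAR + γAB) * exp(-(2^R-1)/(ρ γAB))`. -/
theorem sop_direct_transmission {Ω : Type*} [MeasurableSpace Ω] (μ : Measure Ω)
    [IsProbabilityMeasure μ] (γAB γAR ρ R : ℝ) (hAB : 0 < γAB) (hAR : 0 < γAR)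
    (hρ : 0 < ρ) (hR : 0 ≤ R) (X Y : Ω → ℝ)
    (hXm : Measurable X) (hYm : Measurable Y)
    (hX : Measure.map X μ = expMeasure (1 / γAB))
    (hY : Measure.map Y μ = expMeasure (1 / γAR))
    (hXY : IndepFun X Y μ) :
    μ {ω | (1 + ρ * X ω) / (1 + ρ * Y ω) < (2 : ℝ) ^ R}
      = ENNReal.ofReal
          (1 - γAB / ((2 : ℝ) ^ R * γAR + γAB) * Real.exp (-((2 : ℝ) ^ R - 1) / (ρ * γAB))) := by
  set τ := (2 : ℝ) ^ R
  have hτ : 1 ≤ τ := one_le_rpow (by norm_num) hR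
  have hY_nonneg : ∀ᵐ ω ∂μ, 0 ≤ Y ω :=
    ae_of_ae_map hYm.aemeasurable (hY ▸ ae_nonneg_expMeasure (by positivity))
  have hevent : {ω | (1 + ρ * X ω) / (1 + ρ * Y ω) < τ} =ᵐ[μ]
      {ω | X ω < (τ - 1) / ρ + τ * Y ω} := by
    refine Filter.eventuallyEq_set.2 (hY_nonneg.mono fun ω hω => ?_)
    show _ < τ ↔ X ω < _
    rw [div_lt_iff₀ (by positivity), ← sub_lt_iff_lt_add, lt_div_iff₀ hρ]
    constructor <;> intro h <;> linarith
  rw [measure_congr hevent, measure_lt_add_mul_of_indepFun_expMeasure (by positivity)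
    (by positivity) (div_nonneg (by linarith) hρ.le) (by linarith) hXm.aemeasurable
    hYm.aemeasurable hX hY hXY, mul_comm]
  congr 3
  · field_simp
    ring
  · field_simp
end

section
/- Let U and V be independent with U = X/Y for X, Y independent exponentials with means γ_AB, γ_AR, and V = W/(W + γ_AR + 1/ρ) for W exponential with mean γ_RB independent of X, Y. Then P(U + V > 1) = μ₁(β₁ − 1) e^{μ₁ β₁} Ei(−μ₁ β₁) + 1, where μ₁ = (γ_AR + 1/ρ)/γ_RB and β₁ = 1 + γ_AR/γ_AB. -/
open MeasureTheory ProbabilityTheory Real Set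

/-- The exponential integral `Ei x = ∫_{-∞}^x e^t / t dt`. -/
noncomputable def Ei (x : ℝ) : ℝ := ∫ t in Set.Iic x, Real.exp t / t

/-! Conditionally on `(W, Y)`, the event is `X > Y c / (W + c)` with `c = γAR + 1/ρ`, of
probability `exp (-Y c / (γAB (W + c)))`. Averaging over `Y` (a Laplace transform) leaves
`(W + c) / (W + b)` with `b = c β₁`, and since `(w + c) / (w + b) = 1 - (b - c) / (w + b)`,
averaging over `W` reduces to `∫₀^∞ e^{-w/γRB} / (w + b) dw = -e^{b/γRB} Ei (-b/γRB)`. -/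

theorem integral_Ioi_comp_add_right {E : Type*} [NormedAddCommGroup E] [NormedSpace ℝ E]
    (f : ℝ → E) (a d : ℝ) : ∫ x in Ioi a, f (x + d) = ∫ x in Ioi (a + d), f x := by
  simpa using (measurePreserving_add_right volume d).setIntegral_preimage_emb
    (measurableEmbedding_addRight d) f (Ioi (a + d))

lemma integrableOn_exp_neg_mul_Ioi {l : ℝ} (hl : 0 < l) (a : ℝ) :
    IntegrableOn (fun x ↦ exp (-(l * x))) (Ioi a) := by
  simpa only [neg_mul] using exp_neg_integrableOn_Ioi a hl

lemma integral_exp_neg_mul_Ioi_zero {l : ℝ} (hl : 0 < l) :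
    ∫ x in Ioi 0, exp (-(l * x)) = l⁻¹ := by
  have h := integral_exp_mul_Ioi (neg_lt_zero.2 hl) 0
  simp only [neg_mul, mul_zero, exp_zero, div_neg] at h
  rw [h, neg_div, neg_neg, one_div]

lemma Ei_neg_mul {l : ℝ} (hl : 0 < l) (b : ℝ) :
    Ei (-(l * b)) = -∫ u in Ioi b, exp (-(l * u)) / u := by
  rw [Ei, ← integral_comp_neg_Ioi, ← integral_comp_mul_left_Ioi' _ _ hl, smul_eq_mul,
    ← integral_const_mul, ← integral_neg]
  congr 1 with u
  rw [div_neg, mul_neg, mul_div_assoc', mul_div_mul_left _ _ hl.ne']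

lemma integral_Ioi_exp_neg_mul_div_add {l : ℝ} (hl : 0 < l) (b : ℝ) :
    ∫ w in Ioi 0, exp (-(l * w)) / (w + b) = -(exp (l * b) * Ei (-(l * b))) := by
  have hshift : ∫ u in Ioi b, exp (-(l * u)) / u
      = exp (-(l * b)) * ∫ w in Ioi 0, exp (-(l * w)) / (w + b) := by
    rw [← zero_add b, ← integral_Ioi_comp_add_right, ← integral_const_mul, zero_add]
    congr 1 with w
    rw [mul_add, neg_add, exp_add]
    ring
  rw [Ei_neg_mul hl, hshift, mul_neg, neg_neg, ← mul_assoc, ← exp_add, add_neg_cancel, exp_zero,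
    one_mul]

lemma integrableOn_exp_neg_mul_div_add {l b : ℝ} (hl : 0 < l) (hb : 0 < b) :
    IntegrableOn (fun w ↦ exp (-(l * w)) / (w + b)) (Ioi 0) := by
  refine (integrableOn_exp_neg_mul_Ioi hl 0).mul_bdd (c := b⁻¹) (by fun_prop) ?_
  filter_upwards [ae_restrict_mem measurableSet_Ioi] with w (hw : 0 < w)
  rw [norm_inv, Real.norm_of_nonneg (by positivity)]
  exact inv_anti₀ hb (by linarith)

lemma expMeasure_Ioi {r t : ℝ} (hr : 0 < r) (ht : 0 ≤ t) :
    expMeasure r (Ioi t) = ENNReal.ofReal (exp (-(r * t))) := by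
  have := isProbabilityMeasure_expMeasure hr
  have hle : exp (-(r * t)) ≤ 1 := exp_le_one_iff.2 (by nlinarith)
  rw [← compl_Iic, prob_compl_eq_one_sub measurableSet_Iic, ← ofReal_cdf, cdf_expMeasure_eq hr,
    if_pos ht, ← ENNReal.ofReal_one, ← ENNReal.ofReal_sub _ (by linarith), sub_sub_cancel]

lemma ae_pos_expMeasure {r : ℝ} (hr : 0 < r) : ∀ᵐ x ∂expMeasure r, 0 < x := by
  have := isProbabilityMeasure_expMeasure hr
  change Ioi 0 ∈ ae _
  rw [mem_ae_iff, prob_compl_eq_zero_iff measurableSet_Ioi, expMeasure_Ioi hr le_rfl, mul_zero,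
    neg_zero, exp_zero, ENNReal.ofReal_one]

lemma lintegral_expMeasure (r : ℝ) (g : ℝ → ENNReal) :
    ∫⁻ x, g x ∂expMeasure r = ∫⁻ x in Ioi 0, ENNReal.ofReal (r * exp (-(r * x))) * g x := by
  have hsupp : (exponentialPDF r * g).support ⊆ Ici 0 := fun x hx ↦ by
    by_contra hneg
    exact hx (by simp [exponentialPDF_of_neg (not_le.1 hneg)])
  rw [show expMeasure r = volume.withDensity (exponentialPDF r) from rfl,
    lintegral_withDensity_eq_lintegral_mul_non_measurable _ (f := exponentialPDF r)
      (measurable_exponentialPDFReal r).ennreal_ofReal (ae_of_all _ fun _ ↦ ENNReal.ofReal_lt_top),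
    ← setLIntegral_eq_of_support_subset hsupp, setLIntegral_congr Ioi_ae_eq_Ici.symm]
  exact setLIntegral_congr_fun measurableSet_Ioi fun x hx ↦ by
    rw [Pi.mul_apply, exponentialPDF_of_nonneg (le_of_lt hx)]

lemma lintegral_ofReal_expMeasure {r : ℝ} (hr : 0 < r) {f : ℝ → ℝ}
    (hf : ∀ x ∈ Ioi 0, 0 ≤ f x) (hfi : IntegrableOn (fun x ↦ r * exp (-(r * x)) * f x) (Ioi 0)) :
    ∫⁻ x, ENNReal.ofReal (f x) ∂expMeasure r
      = ENNReal.ofReal (∫ x in Ioi 0, r * exp (-(r * x)) * f x) := by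
  rw [lintegral_expMeasure, ofReal_integral_eq_lintegral_ofReal hfi]
  · refine setLIntegral_congr_fun measurableSet_Ioi fun x _ ↦ ?_
    rw [← ENNReal.ofReal_mul (by positivity)]
  · filter_upwards [ae_restrict_mem measurableSet_Ioi] with x hx
    have := hf x hx
    positivity

lemma lintegral_exp_neg_mul_expMeasure {r k : ℝ} (hr : 0 < r) (hk : 0 ≤ k) :
    ∫⁻ y, ENNReal.ofReal (exp (-(k * y))) ∂expMeasure r = ENNReal.ofReal (r / (r + k)) := by
  have hrk : 0 < r + k := by linarith
  have hprod : ∀ y, r * exp (-(r * y)) * exp (-(k * y)) = r * exp (-((r + k) * y)) := by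
    intro y
    rw [mul_assoc, ← exp_add]
    ring_nf
  rw [lintegral_ofReal_expMeasure hr (fun _ _ ↦ (exp_pos _).le)
    (by simp only [hprod]; exact (integrableOn_exp_neg_mul_Ioi hrk 0).const_mul r)]
  simp only [hprod]
  rw [integral_const_mul, integral_exp_neg_mul_Ioi_zero hrk, div_eq_mul_inv]

lemma lintegral_add_div_add_expMeasure {r b c : ℝ} (hr : 0 < r) (hb : 0 < b) (hc : 0 ≤ c) :
    ∫⁻ w, ENNReal.ofReal ((w + c) / (w + b)) ∂expMeasure r
      = ENNReal.ofReal (r * (b - c) * exp (r * b) * Ei (-(r * b)) + 1) := by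
  have hsplit : ∀ w ∈ Ioi (0 : ℝ), r * exp (-(r * w)) * ((w + c) / (w + b))
      = r * exp (-(r * w)) - r * (b - c) * (exp (-(r * w)) / (w + b)) := fun w (hw : 0 < w) ↦ by
    field_simp
    ring
  have hint₁ : IntegrableOn (fun w ↦ r * exp (-(r * w))) (Ioi 0) :=
    (integrableOn_exp_neg_mul_Ioi hr 0).const_mul r
  have hint₂ : IntegrableOn (fun w ↦ r * (b - c) * (exp (-(r * w)) / (w + b))) (Ioi 0) :=
    (integrableOn_exp_neg_mul_div_add hr hb).const_mul (r * (b - c))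
  rw [lintegral_ofReal_expMeasure hr (fun w (hw : 0 < w) ↦ by positivity)
    (IntegrableOn.congr_fun (hint₁.sub hint₂) (fun w hw ↦ (hsplit w hw).symm) measurableSet_Ioi),
    setIntegral_congr_fun measurableSet_Ioi hsplit, integral_sub hint₁ hint₂, integral_const_mul,
    integral_const_mul, integral_exp_neg_mul_Ioi_zero hr, integral_Ioi_exp_neg_mul_div_add hr,
    mul_inv_cancel₀ hr.ne']
  congr 1
  ring

section Independence

variable {Ω β : Type*} [MeasurableSpace Ω] [MeasurableSpace β] {μ : Measure Ω}
  {Z : Ω → β} {X : Ω → ℝ} {r : ℝ}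

lemma ae_pos_of_map_eq_expMeasure (hX : Measurable X) (hr : 0 < r)
    (hXd : μ.map X = expMeasure r) : ∀ᵐ ω ∂μ, 0 < X ω :=
  ae_of_ae_map hX.aemeasurable (hXd ▸ ae_pos_expMeasure hr)

lemma measure_lt_of_indepFun_expMeasure [IsFiniteMeasure μ] (hZ : Measurable Z) (hX : Measurable X)
    (hind : IndepFun Z X μ) (hr : 0 < r) (hXd : μ.map X = expMeasure r) {T : β → ℝ}
    (hT : Measurable T) (hT0 : ∀ᵐ ω ∂μ, 0 ≤ T (Z ω)) :
    μ {ω | T (Z ω) < X ω} = ∫⁻ ω, ENNReal.ofReal (exp (-(r * T (Z ω)))) ∂μ := by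
  have hS : MeasurableSet {p : β × ℝ | T p.1 < p.2} :=
    measurableSet_lt (hT.comp measurable_fst) measurable_snd
  have hT0' : ∀ᵐ z ∂μ.map Z, 0 ≤ T z :=
    (ae_map_iff hZ.aemeasurable (measurableSet_le measurable_const hT)).2 hT0
  calc μ {ω | T (Z ω) < X ω} = μ.map (fun ω ↦ (Z ω, X ω)) {p | T p.1 < p.2} :=
        (Measure.map_apply (hZ.prodMk hX) hS).symm
    _ = ∫⁻ z, expMeasure r (Ioi (T z)) ∂μ.map Z := by
        rw [(indepFun_iff_map_prod_eq_prod_map_map hZ.aemeasurable hX.aemeasurable).1 hind,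
          Measure.prod_apply hS, hXd]
        rfl
    _ = ∫⁻ z, ENNReal.ofReal (exp (-(r * T z))) ∂μ.map Z := by
        refine lintegral_congr_ae ?_
        filter_upwards [hT0'] with z hz using expMeasure_Ioi hr hz
    _ = _ := lintegral_map (by fun_prop) hZ

lemma lintegral_exp_neg_mul_of_indepFun_expMeasure [IsFiniteMeasure μ] (hZ : Measurable Z)
    (hX : Measurable X) (hind : IndepFun Z X μ) (hr : 0 < r) (hXd : μ.map X = expMeasure r)
    {k : β → ℝ} (hk : Measurable k) (hk0 : ∀ᵐ ω ∂μ, 0 ≤ k (Z ω)) :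
    ∫⁻ ω, ENNReal.ofReal (exp (-(k (Z ω) * X ω))) ∂μ
      = ∫⁻ ω, ENNReal.ofReal (r / (r + k (Z ω))) ∂μ := by
  have := isProbabilityMeasure_expMeasure hr
  have hk0' : ∀ᵐ z ∂μ.map Z, 0 ≤ k z :=
    (ae_map_iff hZ.aemeasurable (measurableSet_le measurable_const hk)).2 hk0
  calc ∫⁻ ω, ENNReal.ofReal (exp (-(k (Z ω) * X ω))) ∂μ
        = ∫⁻ p, ENNReal.ofReal (exp (-(k p.1 * p.2))) ∂μ.map (fun ω ↦ (Z ω, X ω)) :=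
        (lintegral_map (f := fun p : β × ℝ ↦ ENNReal.ofReal (exp (-(k p.1 * p.2)))) (by fun_prop)
          (hZ.prodMk hX)).symm
    _ = ∫⁻ z, ∫⁻ x, ENNReal.ofReal (exp (-(k z * x))) ∂expMeasure r ∂μ.map Z := by
        rw [(indepFun_iff_map_prod_eq_prod_map_map hZ.aemeasurable hX.aemeasurable).1 hind, hXd,
          lintegral_prod _ (by fun_prop)]
    _ = ∫⁻ z, ENNReal.ofReal (r / (r + k z)) ∂μ.map Z := by
        refine lintegral_congr_ae ?_
        filter_upwards [hk0'] with z hz using lintegral_exp_neg_mul_expMeasure hr hz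
    _ = _ := lintegral_map (by fun_prop) hZ

end Independence

lemma one_lt_div_add_div_add_iff {x y w c : ℝ} (hy : 0 < y) (hwc : 0 < w + c) :
    1 < x / y + w / (w + c) ↔ y * (c / (w + c)) < x := by
  have h : 1 - w / (w + c) = c / (w + c) := by
    field_simp
    ring
  rw [mul_comm, ← lt_div_iff₀ hy, ← h]
  constructor <;> intro <;> linarith

/-- Probability of positive secrecy rate for AF relaying: with `U = X/Y`,
`V = W/(W + γAR + 1/ρ)` for independent exponentials `X, Y, W` with means
`γAB, γAR, γRB`, we have `P(U + V > 1) = μ₁(β₁-1) e^{μ₁β₁} Ei(-μ₁β₁) + 1`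
where `μ₁ = (γAR + 1/ρ)/γRB` and `β₁ = 1 + γAR/γAB`. -/
theorem prob_pos_secrecy_AF {Ω : Type*} [MeasurableSpace Ω] (μ : Measure Ω)
    [IsProbabilityMeasure μ] (γAB γAR γRB ρ : ℝ)
    (hAB : 0 < γAB) (hAR : 0 < γAR) (hRB : 0 < γRB) (hρ : 0 < ρ)
    (X Y W : Ω → ℝ) (hXm : Measurable X) (hYm : Measurable Y) (hWm : Measurable W)
    (hX : Measure.map X μ = expMeasure (1 / γAB))
    (hY : Measure.map Y μ = expMeasure (1 / γAR))
    (hW : Measure.map W μ = expMeasure (1 / γRB))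
    (hindep : iIndepFun ![X, Y, W] μ) :
    μ {ω | 1 < X ω / Y ω + W ω / (W ω + γAR + 1 / ρ)}
      = ENNReal.ofReal
          ((γAR + 1 / ρ) / γRB * (1 + γAR / γAB - 1)
              * Real.exp ((γAR + 1 / ρ) / γRB * (1 + γAR / γAB))
              * Ei (-((γAR + 1 / ρ) / γRB * (1 + γAR / γAB))) + 1) := by
  obtain ⟨c, hc_def⟩ : ∃ c, c = γAR + 1 / ρ := ⟨_, rfl⟩
  have hc : 0 < c := by rw [hc_def]; positivity
  have hYpos := ae_pos_of_map_eq_expMeasure hYm (by positivity) hY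
  have hWpos := ae_pos_of_map_eq_expMeasure hWm (by positivity) hW
  have hmeas : ∀ i, Measurable (![X, Y, W] i) := fun i ↦ by fin_cases i <;> assumption
  have hXWY : IndepFun (fun ω ↦ (W ω, Y ω)) X μ :=
    hindep.indepFun_prodMk hmeas 2 1 0 (by decide) (by decide)
  have hYW : IndepFun W Y μ := hindep.indepFun (show (2 : Fin 3) ≠ 1 by decide)
  calc μ {ω | 1 < X ω / Y ω + W ω / (W ω + γAR + 1 / ρ)}
      = μ {ω | Y ω * (c / (W ω + c)) < X ω} := by
        refine measure_congr ?_
        filter_upwards [hYpos, hWpos] with ω hy hw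
        change (1 < X ω / Y ω + W ω / (W ω + γAR + 1 / ρ)) = (Y ω * (c / (W ω + c)) < X ω)
        rw [add_assoc, ← hc_def]
        exact propext (one_lt_div_add_div_add_iff hy (by positivity))
    _ = ∫⁻ ω, ENNReal.ofReal (exp (-(c / (γAB * (W ω + c)) * Y ω))) ∂μ := by
        rw [measure_lt_of_indepFun_expMeasure (T := fun p : ℝ × ℝ ↦ p.2 * (c / (p.1 + c)))
          (hWm.prodMk hYm) hXm hXWY (by positivity) hX (by fun_prop)
          (by filter_upwards [hYpos, hWpos] with ω hy hw using by positivity)]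
        congr 1 with ω
        congr 3
        field_simp
    _ = ∫⁻ ω, ENNReal.ofReal (1 / γAR / (1 / γAR + c / (γAB * (W ω + c)))) ∂μ :=
        lintegral_exp_neg_mul_of_indepFun_expMeasure (k := fun w ↦ c / (γAB * (w + c))) hWm hYm
          hYW (by positivity) hY (by fun_prop)
          (by filter_upwards [hWpos] with ω hw using by positivity)
    _ = ∫⁻ ω, ENNReal.ofReal ((W ω + c) / (W ω + c * (1 + γAR / γAB))) ∂μ := by
        refine lintegral_congr_ae ?_
        filter_upwards [hWpos] with ω hw
        congr 1
        field_simp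
        ring
    _ = _ := by
        rw [← lintegral_map (f := fun w ↦ ENNReal.ofReal ((w + c) / (w + c * (1 + γAR / γAB))))
          (by fun_prop) hWm, hW,
          lintegral_add_div_add_expMeasure (by positivity) (by positivity) hc.le]
        have harg : 1 / γRB * (c * (1 + γAR / γAB)) = (γAR + 1 / ρ) / γRB * (1 + γAR / γAB) := by
          rw [hc_def]
          ring
        rw [harg, hc_def]
        congr 1
        ring
end

section
/- Let X be exponential with mean γ_AB and Y the sum of K independent exponentials each with mean γ_AR (i.e., Y is Gamma(K, γ_AR)), X independent of Y, ρ > 0, R ≥ 0. Then P((1 + ρX)/(1 + ρY) < 2^R) = 1 − (γ_AB/(2^R γ_AR + γ_AB))^K · exp(−(2^R − 1)/(ρ γ_AB)). -/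
/-!
Since `Y ≥ 0` almost surely, the event is `{X < a + c Y}` with `c = 2 ^ R` and
`a = (2 ^ R - 1) / ρ`. Conditionally on `Y`, the exponential tail gives
`P(X ≥ a + c Y | Y) = exp (-a / γAB) * exp (-c Y / γAB)`, and the Laplace transform of
`Gamma(K, 1 / γAR)` at `c / γAB` is `(γAB / (c γAR + γAB)) ^ K`.
-/

open MeasureTheory ProbabilityTheory Real Set

lemma expMeasure_Ici {r : ℝ} (hr : 0 < r) {t : ℝ} (ht : 0 ≤ t) :
    expMeasure r (Ici t) = ENNReal.ofReal (exp (-(r * t))) := by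
  have := isProbabilityMeasure_expMeasure hr
  have hatom : expMeasure r {t} = 0 :=
    withDensity_absolutelyContinuous _ _ (measure_singleton t)
  have hexp : exp (-(r * t)) ≤ 1 := exp_le_one_iff.2 (neg_nonpos.2 (mul_nonneg hr.le ht))
  rw [← measure_congr (Ioi_ae_eq_Ici' hatom), ← compl_Iic,
    prob_compl_eq_one_sub measurableSet_Iic, ← ofReal_cdf, cdf_expMeasure_eq hr, if_pos ht,
    ← ENNReal.ofReal_one, ← ENNReal.ofReal_sub _ (by linarith), sub_sub_cancel]

lemma gammaMeasure_Iio_zero (a r : ℝ) : gammaMeasure a r (Iio 0) = 0 := by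
  rw [gammaMeasure, withDensity_apply _ measurableSet_Iio, lintegral_gammaPDF_of_nonpos le_rfl]

lemma lintegral_exp_neg_mul_gammaMeasure {a r s : ℝ} (ha : 0 < a) (hr : 0 < r)
    (hrs : 0 < r + s) :
    ∫⁻ y, ENNReal.ofReal (exp (-(s * y))) ∂gammaMeasure a r
      = ENNReal.ofReal ((r / (r + s)) ^ a) := by
  have htilt : ∀ y, ENNReal.ofReal (exp (-(s * y))) * gammaPDF a r y
      = ENNReal.ofReal ((r / (r + s)) ^ a) * gammaPDF a (r + s) y := by
    intro y
    rcases lt_or_ge y 0 with hy | hy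
    · simp only [gammaPDF_of_neg hy, mul_zero]
    · rw [gammaPDF_of_nonneg hy, gammaPDF_of_nonneg hy, ← ENNReal.ofReal_mul (exp_pos _).le,
        ← ENNReal.ofReal_mul (by positivity), div_rpow hr.le hrs.le]
      congr 1
      rw [show -((r + s) * y) = -(s * y) + -(r * y) by ring, exp_add]
      field_simp
  have hpdf : Measurable (gammaPDF a r) := (measurable_gammaPDFReal a r).ennreal_ofReal
  rw [gammaMeasure, lintegral_withDensity_eq_lintegral_mul _ hpdf (by fun_prop)]
  simp only [Pi.mul_apply, mul_comm (gammaPDF a r _), htilt]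
  rw [lintegral_const_mul' _ _ ENNReal.ofReal_ne_top,
    lintegral_gammaPDF_eq_one ha hrs, mul_one]

lemma ae_nonneg_gammaMeasure (a r : ℝ) : ∀ᵐ y ∂gammaMeasure a r, 0 ≤ y := by
  simp only [ae_iff, not_le]
  exact gammaMeasure_Iio_zero a r

lemma measure_le_of_indepFun_expMeasure {Ω β : Type*} [MeasurableSpace Ω] [MeasurableSpace β]
    {μ : Measure Ω} [IsProbabilityMeasure μ] {X : Ω → ℝ} {Y : Ω → β} {f : β → ℝ} {r : ℝ}
    (hr : 0 < r) (hXm : Measurable X) (hYm : Measurable Y) (hf : Measurable f)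
    (hX : μ.map X = expMeasure r) (hXY : IndepFun X Y μ) (hf0 : ∀ᵐ y ∂μ.map Y, 0 ≤ f y) :
    μ {ω | f (Y ω) ≤ X ω} = ∫⁻ y, ENNReal.ofReal (exp (-(r * f y))) ∂μ.map Y := by
  have := isProbabilityMeasure_expMeasure hr
  have hS : MeasurableSet {p : ℝ × β | f p.2 ≤ p.1} :=
    measurableSet_le (hf.comp measurable_snd) measurable_fst
  have hmap : μ.map (fun ω ↦ (X ω, Y ω)) = (expMeasure r).prod (μ.map Y) := by
    rw [← hX]
    exact (indepFun_iff_map_prod_eq_prod_map_map hXm.aemeasurable hYm.aemeasurable).mp hXY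
  calc μ {ω | f (Y ω) ≤ X ω} = μ.map (fun ω ↦ (X ω, Y ω)) {p | f p.2 ≤ p.1} := by
        rw [Measure.map_apply (hXm.prodMk hYm) hS]; rfl
    _ = ∫⁻ y, expMeasure r (Ici (f y)) ∂μ.map Y := by
        rw [hmap, Measure.prod_apply_symm hS]; rfl
    _ = ∫⁻ y, ENNReal.ofReal (exp (-(r * f y))) ∂μ.map Y := by
        refine lintegral_congr_ae ?_
        filter_upwards [hf0] with y hy using expMeasure_Ici hr hy

lemma measure_lt_add_mul_of_indepFun_expMeasure_gammaMeasure {Ω : Type*} [MeasurableSpace Ω]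
    {μ : Measure Ω} [IsProbabilityMeasure μ] {X Y : Ω → ℝ} {r k s a c : ℝ}
    (hr : 0 < r) (hk : 0 < k) (hs : 0 < s) (ha : 0 ≤ a) (hc : 0 ≤ c)
    (hXm : Measurable X) (hYm : Measurable Y)
    (hX : μ.map X = expMeasure r) (hY : μ.map Y = gammaMeasure k s) (hXY : IndepFun X Y μ) :
    μ {ω | X ω < a + c * Y ω}
      = ENNReal.ofReal (1 - exp (-(r * a)) * (s / (s + r * c)) ^ k) := by
  have hf0 : ∀ᵐ y ∂μ.map Y, 0 ≤ a + c * y := by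
    rw [hY]
    filter_upwards [ae_nonneg_gammaMeasure k s] with y hy using by positivity
  have hlaw : μ {ω | a + c * Y ω ≤ X ω}
      = ENNReal.ofReal (exp (-(r * a)) * (s / (s + r * c)) ^ k) := by
    rw [measure_le_of_indepFun_expMeasure hr hXm hYm (by fun_prop) hX hXY hf0, hY]
    simp only [mul_add, neg_add, exp_add, ← mul_assoc]
    simp only [ENNReal.ofReal_mul (exp_pos _).le]
    rw [lintegral_const_mul' _ _ ENNReal.ofReal_ne_top,
      lintegral_exp_neg_mul_gammaMeasure hk hs (by positivity)]
  rw [show {ω | X ω < a + c * Y ω} = {ω | a + c * Y ω ≤ X ω}ᶜ by ext; simp,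
    prob_compl_eq_one_sub (measurableSet_le (by fun_prop) hXm), hlaw, ← ENNReal.ofReal_one,
    ← ENNReal.ofReal_sub _ (by positivity)]

lemma one_add_mul_div_one_add_mul_lt_iff {ρ x y c : ℝ} (hρ : 0 < ρ) (hy : 0 ≤ y) :
    (1 + ρ * x) / (1 + ρ * y) < c ↔ x < (c - 1) / ρ + c * y := by
  rw [div_lt_iff₀ (by positivity), div_add' _ _ _ hρ.ne', lt_div_iff₀ hρ]
  constructor <;> intro h <;> linarith

/-- Multi-antenna direct-transmission SOP: `X` exponential with mean `γAB`,
`Y ~ Gamma(K, 1/γAR)` (sum of `K` i.i.d. exponentials with mean `γAR`), independent.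
Then `P((1+ρX)/(1+ρY) < 2^R) = 1 - (γAB/(2^R γAR + γAB))^K exp(-(2^R-1)/(ργAB))`. -/
theorem sop_DT_multiantenna {Ω : Type*} [MeasurableSpace Ω] (μ : Measure Ω)
    [IsProbabilityMeasure μ] (γAB γAR ρ R : ℝ) (K : ℕ)
    (hAB : 0 < γAB) (hAR : 0 < γAR) (hρ : 0 < ρ) (hR : 0 ≤ R) (hK : 0 < K)
    (X Y : Ω → ℝ) (hXm : Measurable X) (hYm : Measurable Y)
    (hX : Measure.map X μ = expMeasure (1 / γAB))
    (hY : Measure.map Y μ = gammaMeasure (K : ℝ) (1 / γAR))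
    (hXY : IndepFun X Y μ) :
    μ {ω | (1 + ρ * X ω) / (1 + ρ * Y ω) < (2 : ℝ) ^ R}
      = ENNReal.ofReal
          (1 - (γAB / ((2 : ℝ) ^ R * γAR + γAB)) ^ K
              * Real.exp (-((2 : ℝ) ^ R - 1) / (ρ * γAB))) := by
  have hc : 1 ≤ (2 : ℝ) ^ R := one_le_rpow one_le_two hR
  have hY0 : ∀ᵐ ω ∂μ, 0 ≤ Y ω :=
    ae_of_ae_map hYm.aemeasurable (hY ▸ ae_nonneg_gammaMeasure _ _)
  have hevent : {ω | (1 + ρ * X ω) / (1 + ρ * Y ω) < (2 : ℝ) ^ R}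
      =ᵐ[μ] {ω | X ω < ((2 : ℝ) ^ R - 1) / ρ + (2 : ℝ) ^ R * Y ω} := by
    filter_upwards [hY0] with ω hω
    exact propext (one_add_mul_div_one_add_mul_lt_iff hρ hω)
  rw [measure_congr hevent, measure_lt_add_mul_of_indepFun_expMeasure_gammaMeasure
    (by positivity) (by exact_mod_cast hK) (by positivity) (div_nonneg (by linarith) hρ.le)
    (by positivity) hXm hYm hX hY hXY, rpow_natCast]
  congr 1
  field_simp
  ring_nf
end
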